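/- Let A be a normal-form udpda and let q be a non-returning state. Then: (i) every configuration (q'',s'') reachable from (q,⊥) satisfies s'' ≠ ⊥ or q'' ∉ Q−1; and (ii) for any two stack words s, s' ∈ (Γ∖{⊥})*⊥, the transcripts of the unique infinite computations starting at (q,s) and at (q,s') are equal. -/
import Mathlib


/-- The auxiliary alphabet `{a, f}` used in transcripts of computations. -/
inductive AF
  | a
  | f
deriving DecidableEq

/-- The kind of a control state of a normal-form udpda: internal, push, or pop. -/
inductive StKind
  | internal
  | push
  | pop
deriving DecidableEq

/-- A normal-form udpda: the state set is partitioned (by `kind`) into internal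
states `Q₀`, push states `Q₊₁` and pop states `Q₋₁`, with total transition
functions `δint`, `δpush`, `δpop`, and `reads q = true` iff the transitions
from `q` read the input symbol `a` (i.e. `q ∈ R`). -/
structure NFPDA (Q Γ : Type) where
  finQ : Finite Q
  finΓ : Finite Γ
  bot : Γ
  init : Q
  final : Set Q
  kind : Q → StKind
  δint : Q → Q
  δpush : Q → Q × Γ
  δpop : Q → Γ → Q
  reads : Q → Bool

namespace NFPDA

variable {Q Γ : Type}

/-- Valid stack contents: a word in `(Γ∖{⊥})*⊥`. -/
def IsStack (A : NFPDA Q Γ) (s : List Γ) : Prop :=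
  ∃ s', A.bot ∉ s' ∧ s = s' ++ [A.bot]

/-- The unique move available at a configuration.  (A pop transition with the
bottom symbol on top of the stack leaves the stack unchanged; on valid stacks
the bottom symbol is on top exactly when the stack is a singleton.) -/
def step (A : NFPDA Q Γ) : Q × List Γ → Q × List Γ := fun c =>
  match A.kind c.1 with
  | .internal => (A.δint c.1, c.2)
  | .push => ((A.δpush c.1).1, (A.δpush c.1).2 :: c.2)
  | .pop =>
    match c.2 with
    | [] => (c.1, [])
    | [γ] => (A.δpop c.1 γ, [γ])
    | γ :: s' => (A.δpop c.1 γ, s')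

/-- The configuration reached after `k` moves of the unique infinite
computation starting at `c`. -/
def iter (A : NFPDA Q Γ) (c : Q × List Γ) (k : ℕ) : Q × List Γ := A.step^[k] c

open Classical in
/-- The contribution `μ(q)σ` of one move from state `q` to the transcript:
`f` if `q` is final, followed by `a` if the move reads an input symbol. -/
noncomputable def emit (A : NFPDA Q Γ) (q : Q) : List AF :=
  (if q ∈ A.final then [AF.f] else []) ++ (if A.reads q then [AF.a] else [])

/-- The transcript `μ(q₁)σ₁μ(q₂)σ₂⋯μ(q_k)σ_k` of the first `k` moves of the
computation starting at `c`. -/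
noncomputable def transcriptN (A : NFPDA Q Γ) (c : Q × List Γ) (k : ℕ) : List AF :=
  ((List.range k).map fun i => A.emit (A.iter c i).1).flatten

/-- The number of input symbols read during the first `k` moves of the
computation starting at `c`. -/
def readCount (A : NFPDA Q Γ) (c : Q × List Γ) (k : ℕ) : ℕ :=
  ((List.range k).filter fun i => A.reads (A.iter c i).1).length

/-- The language of a normal-form udpda: `a^n` is accepted iff the unique
computation starting at `(q₀, ⊥)` reaches a final state having read exactly
`n` input symbols. -/
def lang (A : NFPDA Q Γ) : Set ℕ :=
  {n | ∃ k, A.readCount (A.init, [A.bot]) k = n ∧ (A.iter (A.init, [A.bot]) k).1 ∈ A.final}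

end NFPDA

lemma nr_key {Q Γ : Type} (A : NFPDA Q Γ) (q : Q)
    (hnr : ∀ k : ℕ, ¬((A.iter (q, [A.bot]) k).2 = [A.bot] ∧
        A.kind (A.iter (q, [A.bot]) k).1 = StKind.pop)) (k : ℕ) :
    ∃ t : List Γ, (A.iter (q, [A.bot]) k).2 = t ++ [A.bot] ∧
      ∀ s : List Γ, s ≠ [] →
        A.iter (q, s) k = ((A.iter (q, [A.bot]) k).1, t ++ s) := by
  induction k with
  | zero =>
    exact ⟨[], rfl, fun s hs => by simp [NFPDA.iter]⟩
  | succ k ih =>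
    obtain ⟨t, h1, h2⟩ := ih
    have hstep : ∀ c : Q × List Γ, A.iter c (k + 1) = A.step (A.iter c k) := fun c =>
      Function.iterate_succ_apply' _ _ _
    cases hk : A.kind (A.iter (q, [A.bot]) k).1 with
    | internal =>
      refine ⟨t, ?_, fun s hs => ?_⟩
      · rw [hstep]; simp [NFPDA.step, hk, h1]
      · rw [hstep, h2 s hs, hstep]; simp [NFPDA.step, hk]
    | push =>
      refine ⟨(A.δpush (A.iter (q, [A.bot]) k).1).2 :: t, ?_, fun s hs => ?_⟩
      · rw [hstep]; simp [NFPDA.step, hk, h1]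
      · rw [hstep, h2 s hs, hstep]; simp [NFPDA.step, hk]
    | pop =>
      match t, h1 with
      | [], h1 => exact absurd ⟨h1, hk⟩ (hnr k)
      | γ :: t', h1 =>
        refine ⟨t', ?_, fun s hs => ?_⟩
        · obtain ⟨x, xs, hx⟩ := List.exists_cons_of_ne_nil
            (show t' ++ [A.bot] ≠ [] by simp)
          rw [hstep]
          simp only [NFPDA.step, hk, h1, List.cons_append, hx]
        · obtain ⟨x, xs, hx⟩ := List.exists_cons_of_ne_nil
            (show t' ++ s ≠ [] by simp [hs])
          obtain ⟨y, ys, hy⟩ := List.exists_cons_of_ne_nil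
            (show t' ++ [A.bot] ≠ [] by simp)
          rw [hstep, h2 s hs, hstep]
          simp only [NFPDA.step, hk, h1, List.cons_append, hx, hy]

/-- Let `A` be a normal-form udpda and `q` a non-returning
state (no configuration with stack `⊥` and a pop control state occurs in the
computation from `(q,⊥)`).  Then (i) every configuration reachable from
`(q,⊥)` has stack `≠ ⊥` or a non-pop control state; and (ii) for any two
valid stacks `s, s'`, the infinite computations starting at `(q,s)` and
`(q,s')` have equal transcripts (move by move, hence as sequences). -/
theorem non_returning_state_transcripts (Q Γ : Type) (A : NFPDA Q Γ) (q : Q)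
    (hnr : ¬∃ k : ℕ, (A.iter (q, [A.bot]) k).2 = [A.bot] ∧
        A.kind (A.iter (q, [A.bot]) k).1 = StKind.pop) :
    (∀ k : ℕ, (A.iter (q, [A.bot]) k).2 ≠ [A.bot] ∨
        A.kind (A.iter (q, [A.bot]) k).1 ≠ StKind.pop) ∧
      ∀ s s' : List Γ, A.IsStack s → A.IsStack s' →
        ∀ k : ℕ, A.transcriptN (q, s) k = A.transcriptN (q, s') k := by
  have hnr' : ∀ k : ℕ, ¬((A.iter (q, [A.bot]) k).2 = [A.bot] ∧
      A.kind (A.iter (q, [A.bot]) k).1 = StKind.pop) := fun k h => hnr ⟨k, h⟩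
  refine ⟨fun k => ?_, fun s s' hs hs' k => ?_⟩
  · by_contra h
    push_neg at h
    exact hnr' k h
  · obtain ⟨u, hu, rfl⟩ := hs
    obtain ⟨u', hu', rfl⟩ := hs'
    have hst : ∀ i : ℕ, (A.iter (q, u ++ [A.bot]) i).1 = (A.iter (q, u' ++ [A.bot]) i).1 := by
      intro i
      obtain ⟨t, -, h2⟩ := nr_key A q hnr' i
      rw [h2 (u ++ [A.bot]) (by simp)]; rw [h2 (u' ++ [A.bot]) (by simp)]
    unfold NFPDA.transcriptN
    simp only [hst]
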